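/- arXiv:1108.4707 — 2 statements merged into one kernel-verified Lean document; each statement's English description precedes it below -/
import Mathlib

section
/- Let f, g : (0,d) → ℝ be C¹, positive, strictly increasing functions tending to 0 at 0. Suppose there is M > 0 with x·(log f)'(x) ≤ M on (0,d). If lim_{x→0} f(x)/g(x) = 0, then lim_{y→0} f⁻¹(y)/g⁻¹(y) = +∞; and if lim_{x→0} f(x)/g(x) = +∞, then lim_{y→0} f⁻¹(y)/g⁻¹(y) = 0. -/
open Set Filter Topology

/-!
The bound `x (log f)' ≤ M` says that `log f t - M log t` is nonincreasing, i.e.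
`f (λ x) ≤ λ ^ M f x` for `λ ≥ 1`. If `f / g → 0`, then for fixed `C ≥ 1` and `x = g⁻¹ y` small,
`f (C x) ≤ C ^ M f x < g x = y = f (f⁻¹ y)`, so `f⁻¹ y > C g⁻¹ y`. If `f / g → ∞`, then for
fixed `ε ≤ 1`, `g x < ε ^ M f x ≤ f (ε x)`, so `f⁻¹ y < ε g⁻¹ y`.
-/

section

variable {d M : ℝ} {f g fi gi : ℝ → ℝ}

theorem antitoneOn_log_sub_mul_log (hf : DifferentiableOn ℝ f (Ioo 0 d))
    (hfpos : ∀ x ∈ Ioo 0 d, 0 < f x) (hupper : ∀ x ∈ Ioo 0 d, x * deriv f x / f x ≤ M) :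
    AntitoneOn (fun t => Real.log (f t) - M * Real.log t) (Ioo 0 d) := by
  have hderiv : ∀ t ∈ Ioo 0 d, HasDerivAt (fun t => Real.log (f t) - M * Real.log t)
      (deriv f t / f t - M * t⁻¹) t := fun t ht =>
    ((hf.differentiableAt (isOpen_Ioo.mem_nhds ht)).hasDerivAt.log (hfpos t ht).ne').sub
      ((Real.hasDerivAt_log ht.1.ne').const_mul M)
  refine antitoneOn_of_deriv_nonpos (convex_Ioo 0 d)
    (fun t ht => (hderiv t ht).continuousAt.continuousWithinAt) ?_ ?_ <;> rw [interior_Ioo]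
  · exact fun t ht => (hderiv t ht).differentiableAt.differentiableWithinAt
  · intro t ht
    have := hupper t ht
    rw [(hderiv t ht).deriv, sub_nonpos, le_mul_inv_iff₀ ht.1]
    rw [mul_div_assoc] at this
    linarith

theorem apply_le_div_rpow_mul_apply (hf : DifferentiableOn ℝ f (Ioo 0 d))
    (hfpos : ∀ x ∈ Ioo 0 d, 0 < f x) (hupper : ∀ x ∈ Ioo 0 d, x * deriv f x / f x ≤ M)
    {a b : ℝ} (ha : a ∈ Ioo 0 d) (hb : b ∈ Ioo 0 d) (hab : a ≤ b) :
    f b ≤ (b / a) ^ M * f a := by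
  have hlog := antitoneOn_log_sub_mul_log hf hfpos hupper ha hb hab
  have hba : 0 < b / a := div_pos hb.1 ha.1
  have hfa := hfpos a ha
  rw [← Real.log_le_log_iff (hfpos b hb) (by positivity),
    Real.log_mul (Real.rpow_pos_of_pos hba M).ne' hfa.ne', Real.log_rpow hba,
    Real.log_div hb.1.ne' ha.1.ne']
  dsimp only at hlog
  linarith

theorem tendsto_nhdsGT_zero_of_rightInverse (hd : 0 < d) (hgpos : ∀ x ∈ Ioo 0 d, 0 < g x)
    (hgmono : StrictMonoOn g (Ioo 0 d))
    (hgi : ∀ᶠ y in 𝓝[>] (0:ℝ), gi y ∈ Ioo 0 d ∧ g (gi y) = y) :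
    Tendsto gi (𝓝[>] 0) (𝓝[>] 0) := by
  refine tendsto_nhdsWithin_of_tendsto_nhds_of_eventually_within _ ?_ (hgi.mono fun y hy => hy.1.1)
  refine tendsto_order.2 ⟨fun a ha => hgi.mono fun y hy => ha.trans hy.1.1, fun a ha => ?_⟩
  have hδ : min a d / 2 ∈ Ioo 0 d := ⟨by positivity, by linarith [min_le_right a d]⟩
  filter_upwards [hgi, Ioo_mem_nhdsGT (hgpos _ hδ)] with y ⟨hy, hgy⟩ hy'
  have hlt : g (gi y) < g (min a d / 2) := hgy.symm ▸ hy'.2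
  have : gi y < min a d / 2 := (hgmono.lt_iff_lt hy hδ).1 hlt
  linarith [min_le_left a d]

theorem tendsto_inverse_div_atTop_of_tendsto_div_zero (hd : 0 < d)
    (hf : DifferentiableOn ℝ f (Ioo 0 d))
    (hfpos : ∀ x ∈ Ioo 0 d, 0 < f x) (hgpos : ∀ x ∈ Ioo 0 d, 0 < g x)
    (hfmono : StrictMonoOn f (Ioo 0 d)) (hgmono : StrictMonoOn g (Ioo 0 d))
    (hupper : ∀ x ∈ Ioo 0 d, x * deriv f x / f x ≤ M)
    (hfi : ∀ᶠ y in 𝓝[>] (0:ℝ), fi y ∈ Ioo 0 d ∧ f (fi y) = y)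
    (hgi : ∀ᶠ y in 𝓝[>] (0:ℝ), gi y ∈ Ioo 0 d ∧ g (gi y) = y)
    (hfg : Tendsto (fun x => f x / g x) (𝓝[>] 0) (𝓝 0)) :
    Tendsto (fun y => fi y / gi y) (𝓝[>] 0) atTop := by
  have hgi0 := tendsto_nhdsGT_zero_of_rightInverse hd hgpos hgmono hgi
  refine tendsto_atTop.2 fun C => ?_
  obtain ⟨c, hCc, hc⟩ : ∃ c, C ≤ c ∧ 1 ≤ c := ⟨max C 1, le_max_left _ _, le_max_right _ _⟩
  have hc0 : 0 < c := by linarith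
  have hsmall : ∀ᶠ y in 𝓝[>] 0, f (gi y) / g (gi y) < (c ^ M)⁻¹ :=
    hgi0.eventually (hfg.eventually (eventually_lt_nhds (by positivity)))
  have hnear : ∀ᶠ y in 𝓝[>] 0, gi y < d / c :=
    (hgi0.mono_right nhdsWithin_le_nhds).eventually (eventually_lt_nhds (div_pos hd hc0))
  filter_upwards [hsmall, hnear, hfi, hgi] with y hsmall hnear ⟨hfid, hfy⟩ ⟨hgid, hgy⟩
  have hcx : c * gi y ∈ Ioo 0 d := ⟨mul_pos hc0 hgid.1, (lt_div_iff₀' hc0).1 hnear⟩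
  have hscale := apply_le_div_rpow_mul_apply hf hfpos hupper hgid hcx
    (le_mul_of_one_le_left hgid.1.le hc)
  rw [mul_div_cancel_right₀ _ hgid.1.ne'] at hscale
  rw [div_lt_iff₀ (hgpos _ hgid), lt_inv_mul_iff₀ (by positivity)] at hsmall
  have hlt : f (c * gi y) < f (fi y) := calc
    f (c * gi y) ≤ c ^ M * f (gi y) := hscale
    _ < g (gi y) := hsmall
    _ = f (fi y) := by rw [hgy, hfy]
  exact hCc.trans ((le_div_iff₀ hgid.1).2 ((hfmono.lt_iff_lt hcx hfid).1 hlt).le)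

theorem tendsto_inverse_div_zero_of_tendsto_div_atTop (hd : 0 < d)
    (hf : DifferentiableOn ℝ f (Ioo 0 d))
    (hfpos : ∀ x ∈ Ioo 0 d, 0 < f x) (hgpos : ∀ x ∈ Ioo 0 d, 0 < g x)
    (hfmono : StrictMonoOn f (Ioo 0 d)) (hgmono : StrictMonoOn g (Ioo 0 d))
    (hupper : ∀ x ∈ Ioo 0 d, x * deriv f x / f x ≤ M)
    (hfi : ∀ᶠ y in 𝓝[>] (0:ℝ), fi y ∈ Ioo 0 d ∧ f (fi y) = y)
    (hgi : ∀ᶠ y in 𝓝[>] (0:ℝ), gi y ∈ Ioo 0 d ∧ g (gi y) = y)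
    (hfg : Tendsto (fun x => f x / g x) (𝓝[>] 0) atTop) :
    Tendsto (fun y => fi y / gi y) (𝓝[>] 0) (𝓝 0) := by
  have hgi0 := tendsto_nhdsGT_zero_of_rightInverse hd hgpos hgmono hgi
  refine tendsto_order.2 ⟨fun a ha => (hfi.and hgi).mono fun y hy =>
    ha.trans (div_pos hy.1.1.1 hy.2.1.1), fun a ha => ?_⟩
  obtain ⟨ε, hε0, hε1, hεa⟩ : ∃ ε, 0 < ε ∧ ε ≤ 1 ∧ ε ≤ a :=
    ⟨min a 1, lt_min ha one_pos, min_le_right _ _, min_le_left _ _⟩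
  have hlarge : ∀ᶠ y in 𝓝[>] 0, ε⁻¹ ^ M < f (gi y) / g (gi y) :=
    hgi0.eventually (hfg.eventually_gt_atTop _)
  filter_upwards [hlarge, hfi, hgi] with y hlarge ⟨hfid, hfy⟩ ⟨hgid, hgy⟩
  have hεx_le : ε * gi y ≤ gi y := mul_le_of_le_one_left hgid.1.le hε1
  have hεx : ε * gi y ∈ Ioo 0 d := ⟨mul_pos hε0 hgid.1, hεx_le.trans_lt hgid.2⟩
  have hscale := apply_le_div_rpow_mul_apply hf hfpos hupper hεx hgid hεx_le
  rw [div_mul_cancel_right₀ hgid.1.ne'] at hscale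
  rw [lt_div_iff₀ (hgpos _ hgid)] at hlarge
  have hlt : f (fi y) < f (ε * gi y) := calc
    f (fi y) = g (gi y) := by rw [hfy, hgy]
    _ < f (ε * gi y) := lt_of_mul_lt_mul_left (hlarge.trans_le hscale) (by positivity)
  calc fi y / gi y < ε * gi y / gi y :=
        div_lt_div_of_pos_right ((hfmono.lt_iff_lt hfid hεx).1 hlt) hgid.1
    _ = ε := mul_div_cancel_right₀ _ hgid.1.ne'
    _ ≤ a := hεa

end

theorem inverse_property_ib_general
    (d M : ℝ) (hd : 0 < d) (f g fi gi : ℝ → ℝ)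
    (hf : ContDiffOn ℝ 1 f (Ioo 0 d))
    (hfpos : ∀ x ∈ Ioo 0 d, 0 < f x) (hgpos : ∀ x ∈ Ioo 0 d, 0 < g x)
    (hfmono : StrictMonoOn f (Ioo 0 d)) (hgmono : StrictMonoOn g (Ioo 0 d))
    (hupper : ∀ x ∈ Ioo 0 d, x * deriv f x / f x ≤ M)
    (hfi : ∀ᶠ y in 𝓝[>] (0:ℝ), fi y ∈ Ioo 0 d ∧ f (fi y) = y)
    (hgi : ∀ᶠ y in 𝓝[>] (0:ℝ), gi y ∈ Ioo 0 d ∧ g (gi y) = y) :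
    (Tendsto (fun x => f x / g x) (𝓝[>] 0) (𝓝 0) →
      Tendsto (fun y => fi y / gi y) (𝓝[>] 0) atTop) ∧
    (Tendsto (fun x => f x / g x) (𝓝[>] 0) atTop →
      Tendsto (fun y => fi y / gi y) (𝓝[>] 0) (𝓝 0)) := by
  have hf' := hf.differentiableOn one_ne_zero
  exact ⟨tendsto_inverse_div_atTop_of_tendsto_div_zero hd hf' hfpos hgpos hfmono hgmono hupper
      hfi hgi,
    tendsto_inverse_div_zero_of_tendsto_div_atTop hd hf' hfpos hgpos hfmono hgmono hupper
      hfi hgi⟩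

/-- Lemma (inverse property) i)(b): under the upper power condition on `f`,
`f/g → 0` implies `f⁻¹/g⁻¹ → +∞`, and `f/g → +∞` implies `f⁻¹/g⁻¹ → 0`. -/
theorem inverse_property_ib
    (d M : ℝ) (hd : 0 < d) (hM : 0 < M) (f g fi gi : ℝ → ℝ)
    (hf : ContDiffOn ℝ 1 f (Ioo 0 d)) (hg : ContDiffOn ℝ 1 g (Ioo 0 d))
    (hfpos : ∀ x ∈ Ioo 0 d, 0 < f x) (hgpos : ∀ x ∈ Ioo 0 d, 0 < g x)
    (hfmono : StrictMonoOn f (Ioo 0 d)) (hgmono : StrictMonoOn g (Ioo 0 d))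
    (hf0 : Tendsto f (𝓝[>] 0) (𝓝 0)) (hg0 : Tendsto g (𝓝[>] 0) (𝓝 0))
    (hupper : ∀ x ∈ Ioo 0 d, x * deriv f x / f x ≤ M)
    (hfi : ∀ᶠ y in 𝓝[>] (0:ℝ), fi y ∈ Ioo 0 d ∧ f (fi y) = y)
    (hgi : ∀ᶠ y in 𝓝[>] (0:ℝ), gi y ∈ Ioo 0 d ∧ g (gi y) = y) :
    (Tendsto (fun x => f x / g x) (𝓝[>] 0) (𝓝 0) →
      Tendsto (fun y => fi y / gi y) (𝓝[>] 0) atTop) ∧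
    (Tendsto (fun x => f x / g x) (𝓝[>] 0) atTop →
      Tendsto (fun y => fi y / gi y) (𝓝[>] 0) (𝓝 0)) :=
  inverse_property_ib_general d M hd f g fi gi hf hfpos hgpos hfmono hgmono hupper hfi hgi
end

section
/- Let g(x) = kx with 0 < k < 1 and x₀ > 0, and let S = {k^n x₀ : n ∈ ℕ}. Then the box dimension of S is 0, and the upper 0-dimensional Minkowski content of S is +∞ (equivalently, limsup_{ε→0} |A_ε(S)|/ε = +∞). -/
open Set Filter Topology MeasureTheory

/-- The length of the `ε`-neighborhood of a set `U ⊆ ℝ`. -/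
noncomputable def nbdLength (U : Set ℝ) (ε : ℝ) : ℝ :=
  (volume (Metric.cthickening ε U)).toReal

/-!
All orbit points `kⁿ x₀ ≤ ε` lie in `[0, ε]`, and only about `log (1/ε) / log (1/k)` points lie
above `ε`, so `|A_ε(S)| = O(ε log (1/ε))`, which is `o(ε^(1-s))` for every `s > 0`. Conversely, at
the scales `εₙ = kⁿ x₀ (1 - k) / 2` the points `x₀, k x₀, …, kⁿ x₀` are more than `2 εₙ` apart,
so `|A_{εₙ}(S)| ≥ 2 (n + 1) εₙ` and `|A_ε(S)| / ε` is unbounded as `ε → 0`.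
-/

open scoped ENNReal

namespace Real

theorem volume_cthickening_le_of_subset_Icc_union_image {ι : Type*} {S : Set ℝ} {a b ε : ℝ}
    {t : Finset ι} {p : ι → ℝ} (hε : 0 ≤ ε) (hS : S ⊆ Icc a b ∪ p '' t) :
    volume (Metric.cthickening ε S) ≤
      ENNReal.ofReal (b - a + 2 * ε) + t.card * ENNReal.ofReal (2 * ε) := by
  have hcover : Metric.cthickening ε S ⊆
      Icc (a - ε) (b + ε) ∪ ⋃ i ∈ t, Metric.closedBall (p i) ε := by
    refine (Metric.cthickening_subset_of_subset ε hS).trans ?_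
    rw [(isCompact_Icc.union (t.finite_toSet.image p).isCompact).cthickening_eq_biUnion_closedBall
      hε, biUnion_union, biUnion_image]
    refine union_subset_union (iUnion₂_subset fun x hx => ?_) subset_rfl
    rw [closedBall_eq_Icc]
    exact Icc_subset_Icc (by linarith [hx.1]) (by linarith [hx.2])
  calc volume (Metric.cthickening ε S)
      ≤ volume (Icc (a - ε) (b + ε)) + volume (⋃ i ∈ t, Metric.closedBall (p i) ε) :=
        (measure_mono hcover).trans (measure_union_le _ _)
    _ ≤ ENNReal.ofReal (b - a + 2 * ε) + ∑ i ∈ t, volume (Metric.closedBall (p i) ε) := by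
        rw [volume_Icc]
        gcongr
        · exact le_of_eq (by ring_nf)
        · exact measure_biUnion_finset_le _ _
    _ = ENNReal.ofReal (b - a + 2 * ε) + t.card * ENNReal.ofReal (2 * ε) := by
        simp only [volume_closedBall, Finset.sum_const, nsmul_eq_mul]

theorem card_mul_le_volume_cthickening_of_pairwise_lt_dist {ι : Type*} {S : Set ℝ} {ε : ℝ}
    {t : Finset ι} {p : ι → ℝ} (hpS : ∀ i ∈ t, p i ∈ S)
    (hsep : (t : Set ι).Pairwise fun i j => 2 * ε < dist (p i) (p j)) :
    t.card * ENNReal.ofReal (2 * ε) ≤ volume (Metric.cthickening ε S) := by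
  have hdisj : (t : Set ι).PairwiseDisjoint fun i => Metric.closedBall (p i) ε :=
    fun i hi j hj hij => Metric.closedBall_disjoint_closedBall (by linarith [hsep hi hj hij])
  calc (t.card : ℝ≥0∞) * ENNReal.ofReal (2 * ε)
      = volume (⋃ i ∈ t, Metric.closedBall (p i) ε) := by
        rw [measure_biUnion_finset hdisj fun _ _ => measurableSet_closedBall]
        simp only [volume_closedBall, Finset.sum_const, nsmul_eq_mul]
    _ ≤ volume (Metric.cthickening ε S) :=
        measure_mono (iUnion₂_subset fun i hi => Metric.closedBall_subset_cthickening (hpS i hi) ε)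

end Real

theorem tendsto_div_rpow_one_sub_of_le_log_mul {f : ℝ → ℝ} {a b s : ℝ} (hs : 0 < s)
    (hf₀ : ∀ᶠ ε in 𝓝[>] 0, 0 ≤ f ε) (hf : ∀ᶠ ε in 𝓝[>] 0, f ε ≤ (a + b * Real.log ε) * ε) :
    Tendsto (fun ε => f ε / ε ^ (1 - s)) (𝓝[>] 0) (𝓝 0) := by
  have hrpow : Tendsto (fun ε : ℝ => ε ^ s) (𝓝[>] 0) (𝓝 0) := by
    simpa [Real.zero_rpow hs.ne'] using
      ((Real.continuousAt_rpow_const 0 s (Or.inr hs.le)).tendsto).mono_left nhdsWithin_le_nhds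
  have hbound : Tendsto (fun ε => a * ε ^ s + b * (Real.log ε * ε ^ s)) (𝓝[>] 0) (𝓝 0) := by
    simpa using (hrpow.const_mul a).add ((tendsto_log_mul_rpow_nhdsGT_zero hs).const_mul b)
  refine squeeze_zero' ?_ ?_ hbound
  · filter_upwards [hf₀, self_mem_nhdsWithin] with ε hfε (hε : 0 < ε)
    positivity
  · filter_upwards [hf, self_mem_nhdsWithin] with ε hfε (hε : 0 < ε)
    have hsplit : ε / ε ^ (1 - s) = ε ^ s := by
      rw [Real.rpow_sub hε, Real.rpow_one, div_div_cancel₀ hε.ne']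
    calc f ε / ε ^ (1 - s) ≤ (a + b * Real.log ε) * ε / ε ^ (1 - s) := by gcongr
      _ = a * ε ^ s + b * (Real.log ε * ε ^ s) := by rw [mul_div_assoc, hsplit]; ring

def linearOrbit (k x₀ : ℝ) : Set ℝ := {y | ∃ n : ℕ, y = k ^ n * x₀}

section LinearOrbit

variable {k x₀ : ℝ}

theorem linearOrbit_subset_Icc_union_image (hk₀ : 0 ≤ k) (hk₁ : k ≤ 1) (hx₀ : 0 ≤ x₀) (N : ℕ) :
    linearOrbit k x₀ ⊆ Icc 0 (k ^ N * x₀) ∪ (fun n => k ^ n * x₀) '' (Finset.range N) := by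
  rintro _ ⟨n, rfl⟩
  rcases lt_or_ge n N with hn | hn
  · exact Or.inr ⟨n, Finset.mem_range.mpr hn, rfl⟩
  · exact Or.inl ⟨by positivity,
      mul_le_mul_of_nonneg_right (pow_le_pow_of_le_one hk₀ hk₁ hn) hx₀⟩

theorem linearOrbit_subset_Icc (hk₀ : 0 ≤ k) (hk₁ : k ≤ 1) (hx₀ : 0 ≤ x₀) :
    linearOrbit k x₀ ⊆ Icc 0 x₀ := by
  rintro _ ⟨n, rfl⟩
  exact ⟨by positivity, mul_le_of_le_one_left hx₀ (pow_le_one₀ hk₀ hk₁)⟩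

theorem nbdLength_linearOrbit_le (hk₀ : 0 ≤ k) (hk₁ : k ≤ 1) (hx₀ : 0 ≤ x₀) {ε : ℝ} (hε : 0 ≤ ε)
    {N : ℕ} (hN : k ^ N * x₀ ≤ ε) : nbdLength (linearOrbit k x₀) ε ≤ (2 * N + 3) * ε := by
  have hvol := Real.volume_cthickening_le_of_subset_Icc_union_image hε
    (linearOrbit_subset_Icc_union_image hk₀ hk₁ hx₀ N)
  rw [Finset.card_range, ← ENNReal.ofReal_natCast, ← ENNReal.ofReal_mul (by positivity),
    ← ENNReal.ofReal_add (by linarith [mul_nonneg (pow_nonneg hk₀ N) hx₀])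
      (by positivity)] at hvol
  refine ENNReal.toReal_le_of_le_ofReal (by positivity) (hvol.trans (ENNReal.ofReal_le_ofReal ?_))
  linarith

theorem exists_pow_mul_le_and_le_logb (hk₀ : 0 < k) (hk₁ : k < 1) (hx₀ : 0 < x₀) {ε : ℝ}
    (hε : 0 < ε) (hεx₀ : ε ≤ x₀) :
    ∃ N : ℕ, k ^ N * x₀ ≤ ε ∧ (N : ℝ) ≤ Real.logb k (ε / x₀) + 1 := by
  have hlogb : 0 ≤ Real.logb k (ε / x₀) :=
    Real.logb_nonneg_of_base_lt_one hk₀ hk₁ (by positivity) ((div_le_one hx₀).mpr hεx₀)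
  refine ⟨⌈Real.logb k (ε / x₀)⌉₊, ?_, (Nat.ceil_lt_add_one hlogb).le⟩
  calc k ^ ⌈Real.logb k (ε / x₀)⌉₊ * x₀
      = k ^ (⌈Real.logb k (ε / x₀)⌉₊ : ℝ) * x₀ := by rw [Real.rpow_natCast]
    _ ≤ k ^ Real.logb k (ε / x₀) * x₀ :=
        mul_le_mul_of_nonneg_right
          (Real.rpow_le_rpow_of_exponent_ge hk₀ hk₁.le (Nat.le_ceil _)) hx₀.le
    _ = ε := by rw [Real.rpow_logb hk₀ hk₁.ne (by positivity), div_mul_cancel₀ _ hx₀.ne']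

theorem eventually_nbdLength_linearOrbit_le_log_mul (hk₀ : 0 < k) (hk₁ : k < 1) (hx₀ : 0 < x₀) :
    ∀ᶠ ε in 𝓝[>] 0, nbdLength (linearOrbit k x₀) ε ≤
      (5 - 2 * Real.log x₀ / Real.log k + 2 / Real.log k * Real.log ε) * ε := by
  filter_upwards [Ioo_mem_nhdsGT hx₀] with ε ⟨hε, hεx₀⟩
  obtain ⟨N, hN, hNle⟩ := exists_pow_mul_le_and_le_logb hk₀ hk₁ hx₀ hε hεx₀.le
  refine (nbdLength_linearOrbit_le hk₀.le hk₁.le hx₀.le hε.le hN).trans ?_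
  rw [Real.logb, Real.log_div hε.ne' hx₀.ne'] at hNle
  have hcoef : (2 * N + 3 : ℝ) ≤
      5 - 2 * Real.log x₀ / Real.log k + 2 / Real.log k * Real.log ε :=
    calc (2 * N + 3 : ℝ) ≤ 2 * ((Real.log ε - Real.log x₀) / Real.log k + 1) + 3 := by linarith
      _ = _ := by ring
  gcongr

theorem le_nbdLength_linearOrbit (hk₀ : 0 < k) (hk₁ : k < 1) (hx₀ : 0 < x₀) (n : ℕ) :
    2 * (n + 1) * (k ^ n * x₀ * (1 - k) / 2) ≤
      nbdLength (linearOrbit k x₀) (k ^ n * x₀ * (1 - k) / 2) := by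
  set ε := k ^ n * x₀ * (1 - k) / 2 with hε_def
  have hε : 0 < ε := by
    have : 0 < 1 - k := sub_pos.mpr hk₁
    positivity
  have hgap : ∀ i j, i < j → j < n + 1 → 2 * ε < dist (k ^ i * x₀) (k ^ j * x₀) := by
    intro i j hij hj
    have hji : k ^ j * x₀ ≤ k ^ i * k * x₀ :=
      mul_le_mul_of_nonneg_right (pow_succ k i ▸ pow_le_pow_of_le_one hk₀.le hk₁.le hij) hx₀.le
    have hni : k ^ n * ((1 - k) * x₀) < k ^ i * ((1 - k) * x₀) :=
      mul_lt_mul_of_pos_right (pow_lt_pow_right_of_lt_one₀ hk₀ hk₁ (by omega))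
        (mul_pos (sub_pos.mpr hk₁) hx₀)
    have hik : k ^ i * k * x₀ < k ^ i * x₀ := by
      have := mul_lt_mul_of_pos_left hk₁ (mul_pos (pow_pos hk₀ i) hx₀)
      linarith
    rw [hε_def, Real.dist_eq, abs_of_pos (by linarith)]
    linarith
  have hsep : (↑(Finset.range (n + 1)) : Set ℕ).Pairwise
      fun i j => 2 * ε < dist (k ^ i * x₀) (k ^ j * x₀) := by
    intro i hi j hj hij
    simp only [Finset.coe_range, mem_Iio] at hi hj
    rcases hij.lt_or_gt with h | h
    · exact hgap i j h hj
    · exact dist_comm (k ^ i * x₀) _ ▸ hgap j i h hi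
  have hvol := Real.card_mul_le_volume_cthickening_of_pairwise_lt_dist (S := linearOrbit k x₀)
    (fun i _ => ⟨i, rfl⟩) hsep
  have hfin : volume (Metric.cthickening ε (linearOrbit k x₀)) ≠ ⊤ :=
    ((Metric.isBounded_Icc 0 x₀).subset
      (linearOrbit_subset_Icc hk₀.le hk₁.le hx₀.le)).cthickening.measure_lt_top.ne
  rw [Finset.card_range, ← ENNReal.ofReal_natCast, ← ENNReal.ofReal_mul (by positivity),
    ENNReal.ofReal_le_iff_le_toReal hfin] at hvol
  push_cast at hvol
  exact (le_of_eq (by ring)).trans hvol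

theorem frequently_lt_nbdLength_linearOrbit_div (hk₀ : 0 < k) (hk₁ : k < 1) (hx₀ : 0 < x₀)
    (C : ℝ) : ∃ᶠ ε in 𝓝[>] 0, C < nbdLength (linearOrbit k x₀) ε / ε := by
  have hscale_pos : ∀ n : ℕ, 0 < k ^ n * x₀ * (1 - k) / 2 := fun n => by
    have : 0 < 1 - k := sub_pos.mpr hk₁
    positivity
  have hscale : Tendsto (fun n : ℕ => k ^ n * x₀ * (1 - k) / 2) atTop (𝓝[>] 0) := by
    refine tendsto_nhdsWithin_of_tendsto_nhds_of_eventually_within _ ?_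
      (Eventually.of_forall hscale_pos)
    simpa using ((tendsto_pow_atTop_nhds_zero_of_lt_one hk₀.le hk₁).mul_const x₀).mul_const
      ((1 - k) / 2) |>.congr fun n => by ring
  have hratio : Tendsto (fun n : ℕ => nbdLength (linearOrbit k x₀) (k ^ n * x₀ * (1 - k) / 2) /
      (k ^ n * x₀ * (1 - k) / 2)) atTop atTop := by
    refine tendsto_atTop_mono (fun n => ?_) (tendsto_natCast_atTop_atTop (R := ℝ))
    rw [le_div_iff₀ (hscale_pos n)]
    nlinarith [le_nbdLength_linearOrbit hk₀ hk₁ hx₀ n, hscale_pos n]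
  exact hscale.frequently (hratio.eventually_gt_atTop C).frequently

end LinearOrbit

/-- For the orbit `S = {kⁿ x₀}` of `g(x) = kx`, `0 < k < 1`: the box dimension of `S`
is `0` (the upper `s`-dimensional Minkowski content vanishes for every `s > 0`),
while the upper `0`-dimensional Minkowski content is `+∞`
(`limsup_{ε→0} |A_ε(S)|/ε = +∞`). -/
theorem linear_orbit_box_dimension_zero
    (k x₀ : ℝ) (hk : k ∈ Ioo (0:ℝ) 1) (hx₀ : 0 < x₀) :
    (∀ s : ℝ, 0 < s →
      Tendsto (fun ε => nbdLength {y : ℝ | ∃ n : ℕ, y = k ^ n * x₀} ε / ε ^ (1 - s))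
        (𝓝[>] 0) (𝓝 0)) ∧
    (∀ C : ℝ, ∃ᶠ ε in 𝓝[>] (0:ℝ),
      C < nbdLength {y : ℝ | ∃ n : ℕ, y = k ^ n * x₀} ε / ε) := by
  obtain ⟨hk₀, hk₁⟩ := hk
  exact ⟨fun s hs => tendsto_div_rpow_one_sub_of_le_log_mul hs
      (Eventually.of_forall fun _ => ENNReal.toReal_nonneg)
      (eventually_nbdLength_linearOrbit_le_log_mul hk₀ hk₁ hx₀),
    frequently_lt_nbdLength_linearOrbit_div hk₀ hk₁ hx₀⟩
end
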